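/- In an arboreal category, for every object X and every M-subobject m of X, m is the supremum in M-Sub(X) of the set of path embeddings into X that are below m. -/

import Mathlib

open CategoryTheory CategoryTheory.Limits

universe v u

variable {C : Type u} [Category.{v} C]

/-- A weak factorisation system `(Q, M)` on a category `C`. -/
structure WFS (C : Type u) [Category.{v} C] where
  Q : MorphismProperty C
  M : MorphismProperty C
  fact : ∀ {X Y : C} (f : X ⟶ Y), ∃ (Z : C) (e : X ⟶ Z) (m : Z ⟶ Y), Q e ∧ M m ∧ e ≫ m = f
  Q_iff : ∀ {X Y : C} (f : X ⟶ Y), Q f ↔ ∀ ⦃A B : C⦄ (g : A ⟶ B), M g → HasLiftingProperty f g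
  M_iff : ∀ {X Y : C} (g : X ⟶ Y), M g ↔ ∀ ⦃A B : C⦄ (f : A ⟶ B), Q f → HasLiftingProperty f g

/-- A proper factorisation system: a weak factorisation system in which every `Q`-morphism is an
epimorphism and every `M`-morphism is a monomorphism. -/
structure ProperWFS (C : Type u) [Category.{v} C] extends WFS C where
  q_epi : ∀ {X Y : C} (f : X ⟶ Y), Q f → Epi f
  m_mono : ∀ {X Y : C} (f : X ⟶ Y), M f → Mono f


/-- A stable proper factorisation system: additionally, the pullback of a quotient (`Q`-morphism)
along an embedding (`M`-morphism) exists and is again a quotient. -/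
structure StableWFS (C : Type u) [Category.{v} C] extends ProperWFS C where
  stable : ∀ {X Z W : C} (e : X ⟶ W) (m : Z ⟶ W), Q e → M m →
    ∃ (P : C) (p₁ : P ⟶ X) (p₂ : P ⟶ Z), IsPullback p₁ p₂ e m ∧ Q p₂

/-- The type of `M`-subobjects (representatives): embeddings into `X`. -/
abbrev MSub (M : MorphismProperty C) (X : C) : Type (max u v) :=
  Σ S : C, {m : S ⟶ X // M m}

/-- `M`-subobjects are preordered by factorisation; the poset of `M`-subobjects is the
induced partial order on the antisymmetrization. -/
instance (M : MorphismProperty C) (X : C) : Preorder (MSub M X) where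
  le a b := ∃ i : a.1 ⟶ b.1, i ≫ b.2.1 = a.2.1
  le_refl a := ⟨𝟙 a.1, Category.id_comp _⟩
  le_trans a b c h₁ h₂ := by
    obtain ⟨i, hi⟩ := h₁
    obtain ⟨j, hj⟩ := h₂
    exact ⟨i ≫ j, by rw [Category.assoc, hj, hi]⟩

/-- An object `X` is a path if its poset of `M`-subobjects is a finite chain, i.e. the preorder
of `M`-subobjects is total and has finitely many equivalence classes. -/
def IsPathOb (M : MorphismProperty C) (X : C) : Prop :=
  (∀ a b : MSub M X, a ≤ b ∨ b ≤ a) ∧ Finite (Antisymmetrization (MSub M X) (· ≤ ·))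

/-- A path category: a category with a stable proper factorisation system having all small
coproducts of paths, in which every path is connected, and satisfying the 2-out-of-3 condition
for quotients between paths. -/
structure PathCategory (C : Type u) [Category.{v} C] extends StableWFS C where
  pathCoproducts : ∀ {ι : Type v} (Ps : ι → C), (∀ i, IsPathOb M (Ps i)) →
    HasColimit (Discrete.functor Ps)
  connected : ∀ {ι : Type v} [Nonempty ι] (Ps : ι → C), (∀ i, IsPathOb M (Ps i)) →
    ∀ (c : ColimitCocone (Discrete.functor Ps)) {P : C}, IsPathOb M P →
      ∀ f : P ⟶ c.cocone.pt, ∃ (i : ι) (g : P ⟶ Ps i), g ≫ c.cocone.ι.app ⟨i⟩ = f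
  two_of_three : ∀ {P R S : C}, IsPathOb M P → IsPathOb M R → IsPathOb M S →
    ∀ (f : P ⟶ R) (g : R ⟶ S), Q (f ≫ g) → Q f

/-- The indexing category of path embeddings into `X`: the full subcategory of `Over X`
on embeddings with path domain. -/
abbrev PathOver (M : MorphismProperty C) (X : C) :=
  ObjectProperty.FullSubcategory (fun f : Over X => M f.hom ∧ IsPathOb M f.left)

/-- The canonical diagram of path embeddings into `X`. -/
def pathDiagram (M : MorphismProperty C) (X : C) : PathOver M X ⥤ C :=
  ObjectProperty.ι _ ⋙ Over.forget X

/-- The canonical cocone with vertex `X` over the diagram of path embeddings into `X`. -/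
def pathCocone (M : MorphismProperty C) (X : C) : Cocone (pathDiagram M X) where
  pt := X
  ι :=
    { app := fun f => f.obj.hom
      naturality := fun f g k => by
        simp [pathDiagram] }

/-- An arboreal category: a path category in which every object is path-generated, i.e. the
canonical cocone of path embeddings into `X` is a colimit cocone, for every `X`. -/
structure ArborealCategory (C : Type u) [Category.{v} C] extends PathCategory C where
  pathGenerated : ∀ X : C, Nonempty (IsColimit (pathCocone M X))

/-
Every path embedding `p ↪ a` gives a path embedding `p ↪ a ↪ X` below `a`, hence below `b`.
Since `a` is the colimit of its path embeddings and `b ↪ X` is a monomorphism, these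
factorisations through `b` are compatible and glue to a factorisation of `a ↪ X` through `b`.
-/

theorem WFS.M_eq_rlp (W : WFS C) : W.M = W.Q.rlp := by
  ext X Y g
  exact W.M_iff g

theorem WFS.M_comp (W : WFS C) {A B D : C} {f : A ⟶ B} {g : B ⟶ D} (hf : W.M f) (hg : W.M g) :
    W.M (f ≫ g) := by
  rw [W.M_eq_rlp] at hf hg ⊢
  exact W.Q.rlp.comp_mem f g hf hg

theorem CategoryTheory.Limits.IsColimit.exists_factor_of_mono {J : Type*} [Category J] {F : J ⥤ C} {c : Cocone F}
    (hc : IsColimit c) {Z X : C} (m : Z ⟶ X) [Mono m] (g : c.pt ⟶ X)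
    (h : ∀ j, ∃ i : F.obj j ⟶ Z, i ≫ m = c.ι.app j ≫ g) : ∃ t : c.pt ⟶ Z, t ≫ m = g := by
  choose i hi using h
  let s : Cocone F :=
    { pt := Z
      ι :=
        { app := i
          naturality := fun j k u => by
            dsimp only [Functor.const_obj_obj, Functor.const_obj_map]
            rw [Category.comp_id, ← cancel_mono m, Category.assoc, hi, hi, ← Category.assoc,
              c.w] } }
  refine ⟨hc.desc s, hc.hom_ext fun j => ?_⟩
  rw [← Category.assoc, hc.fac s j]
  exact hi j

theorem MSub.le_of_forall_path_le (ac : ArborealCategory C) {X : C} (a b : MSub ac.M X)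
    (hb : ∀ p : MSub ac.M X, IsPathOb ac.M p.1 → p ≤ a → p ≤ b) : a ≤ b := by
  have : Mono b.2.1 := ac.m_mono _ b.2.2
  obtain ⟨hc⟩ := ac.pathGenerated a.1
  refine hc.exists_factor_of_mono b.2.1 a.2.1 fun f => ?_
  let p : MSub ac.M X := ⟨f.obj.left, f.obj.hom ≫ a.2.1, ac.M_comp f.property.1 a.2.2⟩
  exact hb p f.property.2 ⟨f.obj.hom, rfl⟩

/-- In an arboreal category, every `M`-subobject `a` of an object `X` is the supremum in
`M-Sub(X)` of the set of path embeddings into `X` below `a`. -/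
theorem stmt17 (ac : ArborealCategory C) {X : C} (a : MSub ac.M X) :
    (∀ p : MSub ac.M X, IsPathOb ac.M p.1 → p ≤ a → p ≤ a) ∧
    (∀ b : MSub ac.M X, (∀ p : MSub ac.M X, IsPathOb ac.M p.1 → p ≤ a → p ≤ b) → a ≤ b) :=
  ⟨fun _ _ h => h, MSub.le_of_forall_path_le ac a⟩
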